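/- arXiv:2405.17178 — 5 statements merged into one kernel-verified Lean document; each statement's English description precedes it below -/
import Mathlib

section
/- Let f, g, h be real-valued functions on a compact interval [a,b], where h has bounded variation V(h) on [a,b], and suppose the Riemann–Stieltjes integrals ∫_a^b f dg and ∫_a^b h f dg both exist. Then m·∫_a^b f dg + V(h)·sup_{a≤a'≤b'≤b} ∫_{a'}^{b'} f dg ≥ ∫_a^b h f dg ≥ m·∫_a^b f dg + V(h)·inf_{a≤a'≤b'≤b} ∫_{a'}^{b'} f dg, where m = inf{h(x) : x ∈ [a,b]}. -/
open Filter Set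

/-- Riemann–Stieltjes sum of `f` with respect to `g` over a tagged partition. -/
noncomputable def RSSum (f g : ℝ → ℝ) (n : ℕ) (t : Fin (n + 1) → ℝ) (ξ : Fin n → ℝ) : ℝ :=
  ∑ i : Fin n, f (ξ i) * (g (t i.succ) - g (t i.castSucc))

/-- `I` is the Riemann–Stieltjes integral `∫_a^b f dg`: for every `ε > 0` there is a mesh
size `δ > 0` such that every tagged partition of `[a,b]` with mesh `< δ` has its
Riemann–Stieltjes sum within `ε` of `I`. -/
def HasRSIntegral (f g : ℝ → ℝ) (a b I : ℝ) : Prop :=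
  ∀ ε > (0 : ℝ), ∃ δ > (0 : ℝ), ∀ (n : ℕ) (t : Fin (n + 1) → ℝ) (ξ : Fin n → ℝ),
    Monotone t → t 0 = a → t (Fin.last n) = b →
    (∀ i : Fin n, t i.castSucc ≤ ξ i ∧ ξ i ≤ t i.succ ∧ t i.succ - t i.castSucc < δ) →
    |RSSum f g n t ξ - I| < ε

/-!
Write `h = m + u` with `m = inf h` and `u ≥ 0` on `[a, b]`. Along a fine tagged partition that
has a near-minimiser `x₀` of `h` among its tags, the Riemann–Stieltjes sum of `h f` is `m` times
that of `f` plus `∑ uᵢ wᵢ`, where every block sum `∑_{k ≤ i < l} wᵢ` approximates `∫ f dg` over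
`[t_k, t_l]` and is therefore at most `sup ∫ f dg + O(ε)`. A summation by parts bounds `∑ uᵢ wᵢ`
by this block bound times `u(x₀)` plus the variation of `u` along the tags, that is by
`(sup ∫ f dg + O(ε)) (ε + V(h))`. The lower bound is the upper bound applied to `-f`.
-/

open Finset Topology

lemma mul_le_mul_max_sub_add_mul_max {x y s σ : ℝ} (hx : 0 ≤ x) (hy : 0 ≤ y) (hs : s ≤ σ) :
    x * s ≤ σ * max (x - y) 0 + y * max s 0 := by
  rcases le_total x y with hxy | hxy <;> rcases le_total 0 s with h0 | h0 <;>
    simp only [max_eq_left, max_eq_right, sub_nonneg, sub_nonpos, *] <;> nlinarith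

/-- Invariant of a left-to-right summation by parts: `j` is the start of the current block,
restarted at `k` whenever the block sum turns negative. -/
lemma exists_sum_mul_le_of_sum_Ico_le {σ : ℝ} {u w : ℕ → ℝ} {k : ℕ} (hu : ∀ i ≤ k, 0 ≤ u i)
    (hw : ∀ j l, j ≤ l → l ≤ k → ∑ i ∈ Ico j l, w i ≤ σ) :
    ∃ j ≤ k, ∑ i ∈ range k, u i * w i ≤
      σ * ∑ i ∈ range k, max (u i - u (i + 1)) 0 + u k * ∑ i ∈ Ico j k, w i := by
  induction k with
  | zero => exact ⟨0, le_rfl, by simp⟩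
  | succ k ih =>
    obtain ⟨j, hjk, hsum⟩ :=
      ih (fun i hi => hu i (by omega)) fun j l hjl hl => hw j l hjl (by omega)
    set s := ∑ i ∈ Ico j (k + 1), w i with hs
    obtain ⟨j', hj'k, hs'⟩ : ∃ j' ≤ k + 1, ∑ i ∈ Ico j' (k + 1), w i = max s 0 := by
      rcases le_total 0 s with h | h
      · exact ⟨j, by omega, (max_eq_left h).symm⟩
      · exact ⟨k + 1, le_rfl, by simp [max_eq_right h]⟩
    have hstep := mul_le_mul_max_sub_add_mul_max (hu k (by omega)) (hu (k + 1) le_rfl)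
      (hw j (k + 1) (by omega) le_rfl)
    have hsplit : u k * s = u k * ∑ i ∈ Ico j k, w i + u k * w k := by
      rw [hs, sum_Ico_succ_top hjk, mul_add]
    refine ⟨j', hj'k, ?_⟩
    rw [sum_range_succ, sum_range_succ, hs', mul_add]
    linarith

lemma add_sum_max_sub_le {u : ℕ → ℝ} {q n : ℕ} (hqn : q ≤ n) :
    u n + ∑ i ∈ range n, max (u i - u (i + 1)) 0 ≤ u q + ∑ i ∈ range n, |u (i + 1) - u i| := by
  induction n, hqn using Nat.le_induction with
  | base =>
    gcongr with i
    exact max_le (by rw [abs_sub_comm]; exact le_abs_self _) (abs_nonneg _)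
  | succ n _ ih =>
    rw [sum_range_succ, sum_range_succ]
    have : max (u n - u (n + 1)) 0 ≤ u n - u (n + 1) + |u (n + 1) - u n| :=
      max_le (by linarith [abs_nonneg (u (n + 1) - u n)])
        (by linarith [le_abs_self (u (n + 1) - u n)])
    linarith

theorem sum_mul_le_of_sum_Ico_le {σ : ℝ} {u w : ℕ → ℝ} {n q : ℕ} (hu : ∀ i ≤ n, 0 ≤ u i)
    (hw : ∀ j l, j ≤ l → l ≤ n + 1 → ∑ i ∈ Ico j l, w i ≤ σ) (hqn : q ≤ n) :
    ∑ i ∈ range (n + 1), u i * w i ≤ σ * (u q + ∑ i ∈ range n, |u (i + 1) - u i|) := by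
  obtain ⟨j, hjn, hsum⟩ :=
    exists_sum_mul_le_of_sum_Ico_le hu fun j l hjl hl => hw j l hjl (by omega)
  have hσ : 0 ≤ σ := by simpa using hw 0 0 le_rfl (Nat.zero_le _)
  have hlast : u n * ∑ i ∈ Ico j (n + 1), w i ≤ u n * σ :=
    mul_le_mul_of_nonneg_left (hw j (n + 1) (by omega) le_rfl) (hu n le_rfl)
  rw [sum_Ico_succ_top hjn] at hlast
  calc ∑ i ∈ range (n + 1), u i * w i
      ≤ σ * (u n + ∑ i ∈ range n, max (u i - u (i + 1)) 0) := by
        rw [sum_range_succ]; linarith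
    _ ≤ σ * (u q + ∑ i ∈ range n, |u (i + 1) - u i|) :=
        mul_le_mul_of_nonneg_left (add_sum_max_sub_le hqn) hσ

/-- `ℕ`-indexed counterpart of the tagged partitions in `HasRSIntegral`: nodes `t 0, …, t n`, tags
`ξ 0, …, ξ (n - 1)`, all other values ignored. Unlike `Fin` indexing, this makes splicing and
restricting partitions painless. -/
structure IsFinePartition (δ a b : ℝ) (n : ℕ) (t ξ : ℕ → ℝ) : Prop where
  first : t 0 = a
  last : t n = b
  le_tag : ∀ i < n, t i ≤ ξ i
  tag_le : ∀ i < n, ξ i ≤ t (i + 1)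
  sub_lt : ∀ i < n, t (i + 1) - t i < δ

noncomputable def rsSum (f g : ℝ → ℝ) (n : ℕ) (t ξ : ℕ → ℝ) : ℝ :=
  ∑ i ∈ range n, f (ξ i) * (g (t (i + 1)) - g (t i))

def RSApprox (f g : ℝ → ℝ) (a b I δ ε : ℝ) : Prop :=
  ∀ n t ξ, IsFinePartition δ a b n t ξ → |rsSum f g n t ξ - I| < ε

def splice (n : ℕ) (t s : ℕ → ℝ) (i : ℕ) : ℝ :=
  if i < n then t i else s (i - n)

lemma splice_of_lt {n i : ℕ} (t s : ℕ → ℝ) (hi : i < n) : splice n t s i = t i := if_pos hi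

lemma splice_add (n i : ℕ) (t s : ℕ → ℝ) : splice n t s (n + i) = s i := by
  simp [splice]

lemma splice_of_le {n i : ℕ} {t s : ℕ → ℝ} (hts : t n = s 0) (hi : i ≤ n) :
    splice n t s i = t i := by
  rcases hi.lt_or_eq with hi | rfl
  · exact splice_of_lt t s hi
  · simpa [hts] using splice_add i 0 t s

namespace IsFinePartition

variable {δ a b c : ℝ} {n m : ℕ} {t ξ s η : ℕ → ℝ}

lemma mono (hp : IsFinePartition δ a b n t ξ) {δ' : ℝ} (hδ : δ ≤ δ') :
    IsFinePartition δ' a b n t ξ :=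
  ⟨hp.first, hp.last, hp.le_tag, hp.tag_le, fun i hi => (hp.sub_lt i hi).trans_le hδ⟩

lemma monotoneOn (hp : IsFinePartition δ a b n t ξ) : MonotoneOn t (Set.Iic n) := by
  refine monotoneOn_of_le_succ ordConnected_Iic fun i _ _ hi => ?_
  rw [Order.succ_eq_add_one, Set.mem_Iic] at hi
  exact (hp.le_tag i hi).trans (hp.tag_le i hi)

lemma mem_Icc (hp : IsFinePartition δ a b n t ξ) {i : ℕ} (hi : i ≤ n) : t i ∈ Icc a b := by
  rw [← hp.first, ← hp.last]
  exact ⟨hp.monotoneOn (Nat.zero_le _) hi (Nat.zero_le i),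
    hp.monotoneOn hi (Set.mem_Iic.2 le_rfl) hi⟩

lemma restrict (hp : IsFinePartition δ a b n t ξ) {k l : ℕ} (hkl : k ≤ l) (hln : l ≤ n) :
    IsFinePartition δ (t k) (t l) (l - k) (fun i => t (k + i)) (fun i => ξ (k + i)) where
  first := rfl
  last := by simp only [Nat.add_sub_cancel' hkl]
  le_tag i hi := hp.le_tag (k + i) (by omega)
  tag_le i hi := hp.tag_le (k + i) (by omega)
  sub_lt i hi := hp.sub_lt (k + i) (by omega)

lemma append (h₁ : IsFinePartition δ a c n t ξ) (h₂ : IsFinePartition δ c b m s η) :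
    IsFinePartition δ a b (n + m) (splice n t s) (splice n ξ η) := by
  have hts : t n = s 0 := h₁.last.trans h₂.first.symm
  have key : ∀ i < n + m, splice n t s i ≤ splice n ξ η i ∧
      splice n ξ η i ≤ splice n t s (i + 1) ∧ splice n t s (i + 1) - splice n t s i < δ := by
    intro i hi
    rcases lt_or_ge i n with hin | hin
    · rw [splice_of_le hts hin.le, splice_of_le hts hin, splice_of_lt ξ η hin]
      exact ⟨h₁.le_tag i hin, h₁.tag_le i hin, h₁.sub_lt i hin⟩
    · obtain ⟨j, rfl⟩ := Nat.exists_eq_add_of_le hin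
      rw [add_assoc, splice_add, splice_add, splice_add]
      exact ⟨h₂.le_tag j (by omega), h₂.tag_le j (by omega), h₂.sub_lt j (by omega)⟩
  exact ⟨by rw [splice_of_le hts (Nat.zero_le n), h₁.first], by rw [splice_add, h₂.last],
    fun i hi => (key i hi).1, fun i hi => (key i hi).2.1, fun i hi => (key i hi).2.2⟩

end IsFinePartition

lemma RSApprox.mono {f g : ℝ → ℝ} {a b I δ δ' ε : ℝ} (H : RSApprox f g a b I δ' ε) (hδ : δ ≤ δ') :
    RSApprox f g a b I δ ε :=
  fun n t ξ hp => H n t ξ (hp.mono hδ)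

lemma rsSum_restrict (f g : ℝ → ℝ) (t ξ : ℕ → ℝ) (k l : ℕ) :
    rsSum f g (l - k) (fun i => t (k + i)) (fun i => ξ (k + i)) =
      ∑ i ∈ Ico k l, f (ξ i) * (g (t (i + 1)) - g (t i)) := by
  rw [sum_Ico_eq_sum_range]
  rfl

lemma rsSum_splice (f g : ℝ → ℝ) {n m : ℕ} {t ξ s η : ℕ → ℝ} (hts : t n = s 0) :
    rsSum f g (n + m) (splice n t s) (splice n ξ η) = rsSum f g n t ξ + rsSum f g m s η := by
  rw [rsSum, sum_range_add]
  congr 1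
  · refine sum_congr rfl fun i hi => ?_
    rw [Finset.mem_range] at hi
    rw [splice_of_le hts hi.le, splice_of_le hts hi, splice_of_lt ξ η hi]
  · refine sum_congr rfl fun i _ => ?_
    rw [add_assoc, splice_add, splice_add, splice_add]

lemma exists_isFinePartition {δ a b : ℝ} (hab : a ≤ b) (hδ : 0 < δ) :
    ∃ n t, IsFinePartition δ a b (n + 1) t t := by
  set n := ⌊(b - a) / δ⌋₊
  have hn : b - a < (n + 1) * δ := by
    rw [← div_lt_iff₀ hδ]; exact Nat.lt_floor_add_one _
  have hstep : ∀ i : ℕ, a + (i + 1 : ℕ) * ((b - a) / (n + 1)) - (a + i * ((b - a) / (n + 1))) =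
      (b - a) / (n + 1) := fun i => by push_cast; ring
  refine ⟨n, fun i => a + i * ((b - a) / (n + 1)), ?_, ?_, fun i _ => le_rfl, fun i _ => ?_,
    fun i _ => ?_⟩
  · simp
  · push_cast; field_simp; ring
  · have := hstep i
    have : 0 ≤ (b - a) / (n + 1) := by positivity
    linarith
  · rw [hstep, div_lt_iff₀ (by positivity)]; linarith

lemma exists_isFinePartition_through {δ a b x : ℝ} (hax : a ≤ x) (hxb : x ≤ b) (hδ : 0 < δ) :
    ∃ n t, ∃ q ≤ n, IsFinePartition δ a b (n + 1) t t ∧ t q = x := by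
  obtain ⟨n₁, t₁, h₁⟩ := exists_isFinePartition hax hδ
  obtain ⟨n₂, t₂, h₂⟩ := exists_isFinePartition hxb hδ
  exact ⟨n₁ + 1 + n₂, splice (n₁ + 1) t₁ t₂, n₁ + 1, by omega, h₁.append h₂,
    (splice_add _ 0 t₁ t₂).trans h₂.first⟩

lemma RSSum_eq_rsSum (f g : ℝ → ℝ) (n : ℕ) (t ξ : ℕ → ℝ) :
    RSSum f g n (fun i => t i) (fun i => ξ i) = rsSum f g n t ξ := by
  simp [RSSum, rsSum, Fin.sum_univ_eq_sum_range (fun i => f (ξ i) * (g (t (i + 1)) - g (t i)))]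

lemma hasRSIntegral_iff {f g : ℝ → ℝ} {a b I : ℝ} :
    HasRSIntegral f g a b I ↔ ∀ ε > 0, ∃ δ > 0, RSApprox f g a b I δ ε := by
  refine forall₂_congr fun ε _ => exists_congr fun δ => and_congr_right fun _ => ⟨?_, ?_⟩
  · intro H n t ξ hp
    rw [← RSSum_eq_rsSum]
    refine H n _ _ (fun i j hij => hp.monotoneOn (Nat.le_of_lt_succ i.isLt)
      (Nat.le_of_lt_succ j.isLt) hij) hp.first hp.last fun i => ?_
    exact ⟨hp.le_tag i i.isLt, hp.tag_le i i.isLt, hp.sub_lt i i.isLt⟩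
  · intro H n t ξ _ h0 hn htag
    obtain ⟨T, rfl⟩ : ∃ T : ℕ → ℝ, (fun i : Fin (n + 1) => T i) = t :=
      ⟨fun i => if hi : i < n + 1 then t ⟨i, hi⟩ else 0, funext fun i => dif_pos i.isLt⟩
    obtain ⟨Ξ, rfl⟩ : ∃ Ξ : ℕ → ℝ, (fun i : Fin n => Ξ i) = ξ :=
      ⟨fun i => if hi : i < n then ξ ⟨i, hi⟩ else 0, funext fun i => dif_pos i.isLt⟩
    rw [RSSum_eq_rsSum]
    refine H n T Ξ ⟨h0, hn, fun i hi => (htag ⟨i, hi⟩).1, fun i hi => (htag ⟨i, hi⟩).2.1,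
      fun i hi => (htag ⟨i, hi⟩).2.2⟩

lemma HasRSIntegral.neg {f g : ℝ → ℝ} {a b I : ℝ} (hI : HasRSIntegral f g a b I) :
    HasRSIntegral (fun x => -f x) g a b (-I) := by
  intro ε hε
  obtain ⟨δ, hδ, H⟩ := hI ε hε
  refine ⟨δ, hδ, fun n t ξ ht h0 hn htag => ?_⟩
  have hsum : RSSum (fun x => -f x) g n t ξ = -RSSum f g n t ξ := by
    simp [RSSum, neg_mul, Finset.sum_neg_distrib]
  rw [hsum, ← neg_add', abs_neg]
  exact H n t ξ ht h0 hn htag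

lemma RSApprox.abs_sub_lt {f g : ℝ → ℝ} {a b c d I δ ε : ℝ} (hI : RSApprox f g a b I δ ε)
    (hδ : 0 < δ) (hac : a ≤ c) (hdb : d ≤ b) {n m : ℕ} {t ξ s η : ℕ → ℝ}
    (h₁ : IsFinePartition δ c d n t ξ) (h₂ : IsFinePartition δ c d m s η) :
    |rsSum f g n t ξ - rsSum f g m s η| < 2 * ε := by
  obtain ⟨n₀, t₀, h₀⟩ := exists_isFinePartition hac hδ
  obtain ⟨n₃, t₃, h₃⟩ := exists_isFinePartition hdb hδ
  have extend : ∀ {k : ℕ} {p q : ℕ → ℝ}, IsFinePartition δ c d k p q →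
      |rsSum f g (n₀ + 1) t₀ t₀ + rsSum f g k p q + rsSum f g (n₃ + 1) t₃ t₃ - I| < ε := by
    intro k p q hp
    have := hI _ _ _ ((h₀.append hp).append h₃)
    rwa [rsSum_splice f g ((splice_add _ _ _ _).trans (hp.last.trans h₃.first.symm)),
      rsSum_splice f g (h₀.last.trans hp.first.symm)] at this
  have e₁ := extend h₁
  have e₂ := extend h₂
  rw [abs_lt] at e₁ e₂ ⊢
  constructor <;> linarith

lemma HasRSIntegral.exists_subinterval {f g : ℝ → ℝ} {a b c d I : ℝ}
    (hI : HasRSIntegral f g a b I) (hac : a ≤ c) (hcd : c ≤ d) (hdb : d ≤ b) :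
    ∃ K, HasRSIntegral f g c d K ∧
      ∀ ε δ, 0 < δ → RSApprox f g a b I δ ε → RSApprox f g c d K δ (3 * ε) := by
  rw [hasRSIntegral_iff] at hI
  choose N T hT using fun j : ℕ => exists_isFinePartition hcd (Nat.one_div_pos_of_nat (n := j))
  set S : ℕ → ℝ := fun j => rsSum f g (N j + 1) (T j) (T j)
  have eventually_fine : ∀ δ > 0, ∀ᶠ j in atTop, IsFinePartition δ c d (N j + 1) (T j) (T j) := by
    intro δ hδ
    obtain ⟨J, hJ⟩ := exists_nat_one_div_lt hδ
    filter_upwards [eventually_ge_atTop J] with j hj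
    exact (hT j).mono ((Nat.one_div_le_one_div hj).trans hJ.le)
  have hS : CauchySeq S := by
    refine Metric.cauchySeq_iff'.2 fun ε hε => ?_
    obtain ⟨δ, hδ, H⟩ := hI (ε / 2) (half_pos hε)
    obtain ⟨J, hJ⟩ := (eventually_fine δ hδ).exists_forall_of_atTop
    refine ⟨J, fun j hj => ?_⟩
    have := H.abs_sub_lt hδ hac hdb (hJ j hj) (hJ J le_rfl)
    rw [Real.dist_eq]
    linarith
  obtain ⟨K, hK⟩ := cauchySeq_tendsto_of_complete hS
  have approx : ∀ ε δ, 0 < δ → RSApprox f g a b I δ ε → RSApprox f g c d K δ (3 * ε) := by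
    intro ε δ hδ H n t ξ hp
    have hclose : ∀ᶠ j in atTop, |rsSum f g n t ξ - S j| < 2 * ε :=
      (eventually_fine δ hδ).mono fun j hj => H.abs_sub_lt hδ hac hdb hp hj
    obtain ⟨j, hj⟩ := hclose.exists
    have hlim := le_of_tendsto (tendsto_const_nhds.sub hK).abs (hclose.mono fun _ h => h.le)
    linarith [abs_nonneg (rsSum f g n t ξ - S j)]
  refine ⟨K, hasRSIntegral_iff.2 fun ε hε => ?_, approx⟩
  obtain ⟨δ, hδ, H⟩ := hI (ε / 3) (by positivity)
  exact ⟨δ, hδ, by simpa [mul_div_cancel₀] using approx _ δ hδ H⟩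

def subintervalIntegrals (f g : ℝ → ℝ) (a b : ℝ) : Set ℝ :=
  {I' | ∃ a' b', a ≤ a' ∧ a' ≤ b' ∧ b' ≤ b ∧ HasRSIntegral f g a' b' I'}

lemma IsFinePartition.sum_Ico_le {f g : ℝ → ℝ} {a b I σ δ ε : ℝ} {n k l : ℕ} {t ξ : ℕ → ℝ}
    (hI : HasRSIntegral f g a b I) (hσ : σ ∈ upperBounds (subintervalIntegrals f g a b))
    (hδ : 0 < δ) (H : RSApprox f g a b I δ ε) (hp : IsFinePartition δ a b n t ξ)
    (hkl : k ≤ l) (hln : l ≤ n) :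
    ∑ i ∈ Ico k l, f (ξ i) * (g (t (i + 1)) - g (t i)) ≤ σ + 3 * ε := by
  have hk := hp.mem_Icc (hkl.trans hln)
  have hl := hp.mem_Icc hln
  have htkl : t k ≤ t l := hp.monotoneOn (hkl.trans hln) hln hkl
  obtain ⟨K, hK, hKapprox⟩ := hI.exists_subinterval hk.1 htkl hl.2
  have hKσ : K ≤ σ := hσ ⟨t k, t l, hk.1, htkl, hl.2, hK⟩
  have hclose := hKapprox ε δ hδ H _ _ _ (hp.restrict hkl hln)
  rw [rsSum_restrict, abs_lt] at hclose
  linarith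

lemma BoundedVariationOn.bddBelow_image {α : Type*} [LinearOrder α] {h : α → ℝ} {s : Set α}
    (hh : BoundedVariationOn h s) : BddBelow (h '' s) := by
  rcases s.eq_empty_or_nonempty with rfl | ⟨x₀, hx₀⟩
  · simp
  · exact ⟨h x₀ - (eVariationOn h s).toReal, forall_mem_image.2 fun x hx => by
      linarith [hh.sub_le hx₀ hx]⟩

lemma BoundedVariationOn.sum_abs_sub_le {α : Type*} [LinearOrder α] {h : α → ℝ} {s : Set α}
    (hh : BoundedVariationOn h s) {n : ℕ} {t : ℕ → α} (ht : MonotoneOn t (Set.Iic n))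
    (hts : ∀ i ≤ n, t i ∈ s) :
    ∑ i ∈ range n, |h (t (i + 1)) - h (t i)| ≤ (eVariationOn h s).toReal := by
  rw [← ENNReal.ofReal_le_iff_le_toReal hh, ENNReal.ofReal_sum_of_nonneg fun i _ => abs_nonneg _]
  simpa only [edist_dist, Real.dist_eq] using eVariationOn.sum_le_of_monotoneOn_Iic (f := h) ht hts

lemma HasRSIntegral.le_inf_mul_add_variation_mul_add {f g h : ℝ → ℝ} {a b σ I J ε : ℝ}
    (hab : a ≤ b) (hh : BoundedVariationOn h (Icc a b)) (hI : HasRSIntegral f g a b I)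
    (hJ : HasRSIntegral (fun x => h x * f x) g a b J)
    (hσ : σ ∈ upperBounds (subintervalIntegrals f g a b)) (hε : 0 < ε) :
    J ≤ sInf (h '' Icc a b) * I + ε + |sInf (h '' Icc a b)| * ε +
      (σ + 3 * ε) * (ε + (eVariationOn h (Icc a b)).toReal) := by
  set m := sInf (h '' Icc a b)
  obtain ⟨δI, hδI, HI⟩ := hasRSIntegral_iff.1 hI ε hε
  obtain ⟨δJ, hδJ, HJ⟩ := hasRSIntegral_iff.1 hJ ε hε
  have hδ : 0 < min δI δJ := lt_min hδI hδJ
  obtain ⟨_, ⟨x₀, hx₀, rfl⟩, hx₀m⟩ :=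
    exists_lt_of_csInf_lt ((Set.nonempty_Icc.2 hab).image h) (lt_add_of_pos_right m hε)
  obtain ⟨n, t, q, hqn, hp, htq⟩ := exists_isFinePartition_through hx₀.1 hx₀.2 hδ
  set u : ℕ → ℝ := fun i => h (t i) - m
  set w : ℕ → ℝ := fun i => f (t i) * (g (t (i + 1)) - g (t i))
  have hu : ∀ i ≤ n, 0 ≤ u i := fun i hi =>
    sub_nonneg.2 (csInf_le hh.bddBelow_image ⟨t i, hp.mem_Icc (by omega), rfl⟩)
  have hw : ∀ k l, k ≤ l → l ≤ n + 1 → ∑ i ∈ Ico k l, w i ≤ σ + 3 * ε := fun k l hkl hln =>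
    hp.sum_Ico_le hI hσ hδ (HI.mono (min_le_left _ _)) hkl hln
  have hσε : 0 ≤ σ + 3 * ε := by simpa using hw 0 0 le_rfl (Nat.zero_le _)
  have hvar : u q + ∑ i ∈ range n, |u (i + 1) - u i| ≤ ε + (eVariationOn h (Icc a b)).toReal := by
    have := hh.sum_abs_sub_le (hp.monotoneOn.mono (Set.Iic_subset_Iic.2 n.le_succ))
      fun i hi => hp.mem_Icc (by omega)
    simp only [u, htq, sub_sub_sub_cancel_right]
    linarith
  have hsplit : rsSum (fun x => h x * f x) g (n + 1) t t =
      m * rsSum f g (n + 1) t t + ∑ i ∈ range (n + 1), u i * w i := by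
    simp only [rsSum, mul_sum, ← sum_add_distrib, u, w]
    exact sum_congr rfl fun i _ => by ring
  have hJclose := HJ _ _ _ (hp.mono (min_le_right _ _))
  have hIclose : |m * rsSum f g (n + 1) t t - m * I| ≤ |m| * ε := by
    rw [← mul_sub, abs_mul]
    exact mul_le_mul_of_nonneg_left (HI _ _ _ (hp.mono (min_le_left _ _))).le (abs_nonneg m)
  rw [abs_lt] at hJclose
  rw [abs_le] at hIclose
  have hdiscrete := (sum_mul_le_of_sum_Ico_le hu hw hqn).trans
    (mul_le_mul_of_nonneg_left hvar hσε)
  linarith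

theorem HasRSIntegral.le_inf_mul_add_variation_mul {f g h : ℝ → ℝ} {a b σ I J : ℝ}
    (hab : a ≤ b) (hh : BoundedVariationOn h (Icc a b)) (hI : HasRSIntegral f g a b I)
    (hJ : HasRSIntegral (fun x => h x * f x) g a b J)
    (hσ : σ ∈ upperBounds (subintervalIntegrals f g a b)) :
    J ≤ sInf (h '' Icc a b) * I + (eVariationOn h (Icc a b)).toReal * σ := by
  set m := sInf (h '' Icc a b)
  set V := (eVariationOn h (Icc a b)).toReal
  have hlim : Tendsto (fun ε => m * I + ε + |m| * ε + (σ + 3 * ε) * (ε + V)) (𝓝[>] 0)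
      (𝓝 (m * I + V * σ)) := by
    have hcont : Continuous fun ε => m * I + ε + |m| * ε + (σ + 3 * ε) * (ε + V) := by fun_prop
    convert (hcont.tendsto 0).mono_left nhdsWithin_le_nhds using 2
    ring
  exact ge_of_tendsto hlim (eventually_nhdsWithin_of_forall fun ε hε =>
    hI.le_inf_mul_add_variation_mul_add hab hh hJ hσ hε)

/-- **Beesack–Darst–Pollard inequality.** -/
theorem beesack_darst_pollard
    (a b : ℝ) (hab : a ≤ b) (f g h : ℝ → ℝ)
    (hBV : BoundedVariationOn h (Set.Icc a b))
    (I J : ℝ)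
    (hI : HasRSIntegral f g a b I)
    (hJ : HasRSIntegral (fun x => h x * f x) g a b J)
    (Ssup Sinf : ℝ)
    (hSsup : IsLUB {I' : ℝ | ∃ a' b', a ≤ a' ∧ a' ≤ b' ∧ b' ≤ b ∧ HasRSIntegral f g a' b' I'} Ssup)
    (hSinf : IsGLB {I' : ℝ | ∃ a' b', a ≤ a' ∧ a' ≤ b' ∧ b' ≤ b ∧ HasRSIntegral f g a' b' I'} Sinf) :
    J ≤ sInf (h '' Set.Icc a b) * I + (eVariationOn h (Set.Icc a b)).toReal * Ssup ∧
    sInf (h '' Set.Icc a b) * I + (eVariationOn h (Set.Icc a b)).toReal * Sinf ≤ J := by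
  have hSinf' : -Sinf ∈ upperBounds (subintervalIntegrals (fun x => -f x) g a b) := by
    rintro _ ⟨a', b', ha', hab', hb', hK⟩
    have := hSinf.1 ⟨a', b', ha', hab', hb', by simpa using hK.neg⟩
    linarith
  have hJ' : HasRSIntegral (fun x => h x * -f x) g a b (-J) := by
    simpa only [mul_neg] using hJ.neg
  have lower := hI.neg.le_inf_mul_add_variation_mul hab hBV hJ' hSinf'
  exact ⟨hI.le_inf_mul_add_variation_mul hab hBV hJ hSsup.1, by linarith⟩
end

section
/- Let h : [a,b] → ℝ be of bounded variation with inf_{x∈[a,b]} h(x) = 0, and let F, G : [a,b] → ℝ be functions of bounded variation such that the Riemann–Stieltjes integrals ∫ h dF and ∫ h dG exist. Then |∫_a^b h dF − ∫_a^b h dG| ≤ 2·V(h)·‖F − G‖_∞, where V(h) is the total variation of h and ‖·‖_∞ the supremum norm. -/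
/-!
Both integrals are limits of left-endpoint Riemann–Stieltjes sums over uniform partitions
`t₀ ≤ ⋯ ≤ tₙ`, and the difference of two such sums is the single sum `∑ h(tᵢ) Δ(F - G)(tᵢ)`.
Summing by parts around the value `h(x)` at an arbitrary `x ∈ [a,b]` bounds it by
`‖F - G‖_∞` times the variation of `h` along the closed path `x, t₀, …, tₙ, x`, which is at
most `2 V(h)`, plus `2 h(x) ‖F - G‖_∞`. Letting `h(x)` tend to its infimum `0` gives the bound.
-/

open Filter Set

open Topology

theorem sum_range_mul_sub_eq_by_parts (c d : ℕ → ℝ) (m : ℝ) (n : ℕ) :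
    ∑ i ∈ Finset.range n, c i * (d (i + 1) - d i)
      = m * (d n - d 0) + (c n - m) * d n - (c 0 - m) * d 0
        - ∑ i ∈ Finset.range n, (c (i + 1) - c i) * d (i + 1) := by
  induction n with
  | zero => simp
  | succ n ih => rw [Finset.sum_range_succ, Finset.sum_range_succ, ih]; ring

theorem abs_sum_range_mul_sub_le (c d : ℕ → ℝ) (m : ℝ) {n : ℕ} {M : ℝ}
    (hd : ∀ i ≤ n, |d i| ≤ M) :
    |∑ i ∈ Finset.range n, c i * (d (i + 1) - d i)|
      ≤ (|c 0 - m| + ∑ i ∈ Finset.range n, |c (i + 1) - c i| + |c n - m| + 2 * |m|) * M := by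
  rw [sum_range_mul_sub_eq_by_parts c d m]
  calc _ ≤ |m| * (|d n| + |d 0|) + |c n - m| * |d n| + |c 0 - m| * |d 0|
        + ∑ i ∈ Finset.range n, |c (i + 1) - c i| * |d (i + 1)| := by
        refine (abs_sub _ _).trans (add_le_add ((abs_sub _ _).trans (add_le_add
          ((abs_add_le _ _).trans (add_le_add ?_ (abs_mul _ _).le)) (abs_mul _ _).le)) ?_)
        · rw [abs_mul]; gcongr; exact abs_sub _ _
        · exact (Finset.abs_sum_le_sum_abs _ _).trans_eq (by simp only [abs_mul])
    _ ≤ |m| * (M + M) + |c n - m| * M + |c 0 - m| * M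
        + ∑ i ∈ Finset.range n, |c (i + 1) - c i| * M := by
        gcongr with i hi <;> apply hd <;> first | omega | exact Finset.mem_range.mp hi
    _ = _ := by rw [← Finset.sum_mul]; ring

theorem variationOnFromTo.abs_sub_le_abs_sub {α : Type*} [LinearOrder α] {f : α → ℝ}
    {s : Set α} (hf : LocallyBoundedVariationOn f s) {a y z : α} (ha : a ∈ s) (hy : y ∈ s)
    (hz : z ∈ s) :
    |f z - f y| ≤ |variationOnFromTo f s a z - variationOnFromTo f s a y| := by
  rcases le_total y z with hyz | hzy
  · exact (variationOnFromTo.abs_sub_le_sub_of_le hf ha hy hz hyz).trans (le_abs_self _)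
  · rw [abs_sub_comm, abs_sub_comm (variationOnFromTo f s a z)]
    exact (variationOnFromTo.abs_sub_le_sub_of_le hf ha hz hy hzy).trans (le_abs_self _)

theorem BoundedVariationOn.abs_variationOnFromTo_sub_le {α : Type*} [LinearOrder α]
    {f : α → ℝ} {s : Set α} (hf : BoundedVariationOn f s) {a y z : α} (ha : a ∈ s)
    (hy : y ∈ s) (hz : z ∈ s) :
    |variationOnFromTo f s a z - variationOnFromTo f s a y| ≤ (eVariationOn f s).toReal := by
  rw [variationOnFromTo.sub_right hf.locallyBoundedVariationOn ha hz hy]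
  exact variationOnFromTo.abs_le_eVariationOn hf

/-- Measured by `φ = variationOnFromTo f s x`, the closed path `x, u 0, …, u n, x` runs at most
twice through an interval of length `V(f)`. -/
theorem BoundedVariationOn.sum_closed_path_le {α : Type*} [LinearOrder α] {f : α → ℝ}
    {s : Set α} (hf : BoundedVariationOn f s) {x : α} (hx : x ∈ s) {u : ℕ → α}
    (hu : Monotone u) {n : ℕ} (us : ∀ i ≤ n, u i ∈ s) :
    |f (u 0) - f x| + ∑ i ∈ Finset.range n, |f (u (i + 1)) - f (u i)| + |f (u n) - f x|
      ≤ 2 * (eVariationOn f s).toReal := by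
  set φ := variationOnFromTo f s x
  have hf' := hf.locallyBoundedVariationOn
  have h0 := us 0 n.zero_le
  have hn := us n le_rfl
  have hpath : ∑ i ∈ Finset.range n, |f (u (i + 1)) - f (u i)| ≤ φ (u n) - φ (u 0) := by
    rw [← Finset.sum_range_sub (fun i => φ (u i))]
    refine Finset.sum_le_sum fun i hi => ?_
    have hi := Finset.mem_range.mp hi
    exact variationOnFromTo.abs_sub_le_sub_of_le hf' hx (us i hi.le) (us (i + 1) hi)
      (hu i.le_succ)
  have hstart := variationOnFromTo.abs_sub_le_abs_sub hf' hx hx h0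
  have hend := variationOnFromTo.abs_sub_le_abs_sub hf' hx hx hn
  have hV₀ := hf.abs_variationOnFromTo_sub_le hx hx h0
  have hVₙ := hf.abs_variationOnFromTo_sub_le hx hx hn
  have hV := hf.abs_variationOnFromTo_sub_le hx h0 hn
  rw [abs_le] at hV₀ hVₙ hV
  cases abs_cases (φ (u 0) - φ x) <;> cases abs_cases (φ (u n) - φ x) <;> linarith

theorem RSSum_sub (f g₁ g₂ : ℝ → ℝ) (n : ℕ) (t : Fin (n + 1) → ℝ) (ξ : Fin n → ℝ) :
    RSSum f g₁ n t ξ - RSSum f g₂ n t ξ = RSSum f (g₁ - g₂) n t ξ := by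
  simp only [RSSum, ← Finset.sum_sub_distrib, Pi.sub_apply]
  exact Finset.sum_congr rfl fun _ _ => by ring

theorem RSSum_eq_sum_range (f g : ℝ → ℝ) (u : ℕ → ℝ) (n : ℕ) :
    RSSum f g n (fun i => u i) (fun i => u i)
      = ∑ i ∈ Finset.range n, f (u i) * (g (u (i + 1)) - g (u i)) :=
  Fin.sum_univ_eq_sum_range (fun i => f (u i) * (g (u (i + 1)) - g (u i))) n

theorem abs_RSSum_le {f g : ℝ → ℝ} {s : Set ℝ} (hf : BoundedVariationOn f s) {x : ℝ}
    (hx : x ∈ s) {M : ℝ} (hg : ∀ y ∈ s, |g y| ≤ M) {u : ℕ → ℝ} (hu : Monotone u) {n : ℕ}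
    (us : ∀ i ≤ n, u i ∈ s) :
    |RSSum f g n (fun i => u i) (fun i => u i)|
      ≤ (2 * (eVariationOn f s).toReal + 2 * |f x|) * M := by
  have hM : 0 ≤ M := (abs_nonneg _).trans (hg _ (us 0 n.zero_le))
  rw [RSSum_eq_sum_range]
  refine (abs_sum_range_mul_sub_le (fun i => f (u i)) (fun i => g (u i)) (f x)
    fun i hi => hg _ (us i hi)).trans ?_
  gcongr
  exact hf.sum_closed_path_le hx hu us

noncomputable def uniformPartition (a b : ℝ) (n : ℕ) (i : ℕ) : ℝ :=
  a + i * ((b - a) / n)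

theorem monotone_uniformPartition {a b : ℝ} (hab : a ≤ b) (n : ℕ) :
    Monotone (uniformPartition a b n) := fun i j hij => by
  unfold uniformPartition
  gcongr

theorem uniformPartition_self (a b : ℝ) {n : ℕ} (hn : n ≠ 0) : uniformPartition a b n n = b := by
  unfold uniformPartition
  field_simp
  ring

theorem uniformPartition_succ_sub (a b : ℝ) (n i : ℕ) :
    uniformPartition a b n (i + 1) - uniformPartition a b n i = (b - a) / n := by
  unfold uniformPartition
  push_cast
  ring

theorem uniformPartition_mem_Icc {a b : ℝ} (hab : a ≤ b) {n i : ℕ} (hi : i ≤ n) :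
    uniformPartition a b n i ∈ Set.Icc a b := by
  rcases n.eq_zero_or_pos with rfl | hn
  · simp [uniformPartition, Nat.le_zero.mp hi, hab]
  constructor
  · simpa [uniformPartition] using monotone_uniformPartition hab n i.zero_le
  · simpa [uniformPartition_self a b hn.ne'] using monotone_uniformPartition hab n hi

theorem HasRSIntegral.tendsto_RSSum_uniformPartition {f g : ℝ → ℝ} {a b I : ℝ}
    (hI : HasRSIntegral f g a b I) (hab : a ≤ b) :
    Tendsto (fun n => RSSum f g n (fun i => uniformPartition a b n i)
      (fun i => uniformPartition a b n i)) atTop (𝓝 I) := by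
  refine Metric.tendsto_nhds.2 fun ε hε => ?_
  obtain ⟨δ, hδ, hP⟩ := hI ε hε
  filter_upwards [(tendsto_const_div_atTop_nhds_zero_nat (b - a)).eventually (gt_mem_nhds hδ),
    eventually_ne_atTop 0] with n hmesh hn
  refine hP n _ _ (fun i j hij => monotone_uniformPartition hab n hij) (by simp [uniformPartition])
    (uniformPartition_self a b hn) fun i => ⟨le_rfl, monotone_uniformPartition hab n (Nat.le_succ _), ?_⟩
  simpa [uniformPartition_succ_sub] using hmesh

theorem BoundedVariationOn.bddAbove_abs_sub {α : Type*} [LinearOrder α] {F G : α → ℝ}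
    {s : Set α} (hF : BoundedVariationOn F s) (hG : BoundedVariationOn G s) :
    BddAbove ((fun t => |F t - G t|) '' s) := by
  rcases s.eq_empty_or_nonempty with rfl | ⟨a, ha⟩
  · simp
  refine ⟨|F a - G a| + (eVariationOn F s).toReal + (eVariationOn G s).toReal, ?_⟩
  rintro _ ⟨x, hx, rfl⟩
  have hFx := hF.dist_le hx ha
  have hGx := hG.dist_le hx ha
  rw [Real.dist_eq] at hFx hGx
  have hdiff : |(F x - G x) - (F a - G a)| ≤ |F x - F a| + |G x - G a| := by
    rw [show (F x - G x) - (F a - G a) = (F x - F a) - (G x - G a) by ring]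
    exact abs_sub _ _
  linarith [abs_sub_abs_le_abs_sub (F x - G x) (F a - G a)]

theorem le_of_forall_le_add_mul_of_isGLB_zero {α : Type*} {s : Set α} {g : α → ℝ}
    (hg : IsGLB (g '' s) 0) {L B M : ℝ} (hM : 0 ≤ M) (hL : ∀ x ∈ s, L ≤ B + M * g x) :
    L ≤ B := by
  by_contra! hBL
  obtain ⟨_, ⟨x, hx, rfl⟩, -⟩ := hg.exists_between one_pos
  have hMpos : 0 < M := hM.lt_of_ne <| by
    rintro rfl
    linarith [hL x hx]
  have hlower : (L - B) / M ≤ 0 := hg.2 <| by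
    rintro _ ⟨y, hy, rfl⟩
    rw [div_le_iff₀ hMpos]
    linarith [hL y hy]
  linarith [div_pos (sub_pos.2 hBL) hMpos]

/-- If `h` has bounded variation on `[a,b]` with infimum `0`, and `F`, `G` are of bounded
variation with `∫ h dF` and `∫ h dG` existing, then
`|∫ h dF − ∫ h dG| ≤ 2 · V(h) · ‖F − G‖_∞`. -/
theorem rs_integral_diff_le
    (a b : ℝ) (hab : a ≤ b) (h F G : ℝ → ℝ)
    (hhBV : BoundedVariationOn h (Set.Icc a b))
    (hFBV : BoundedVariationOn F (Set.Icc a b))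
    (hGBV : BoundedVariationOn G (Set.Icc a b))
    (hinf : IsGLB (h '' Set.Icc a b) 0)
    (I₁ I₂ : ℝ)
    (hI₁ : HasRSIntegral h F a b I₁)
    (hI₂ : HasRSIntegral h G a b I₂) :
    |I₁ - I₂| ≤ 2 * (eVariationOn h (Set.Icc a b)).toReal *
      sSup ((fun t => |F t - G t|) '' Set.Icc a b) := by
  set V := (eVariationOn h (Set.Icc a b)).toReal
  set M := sSup ((fun t => |F t - G t|) '' Set.Icc a b)
  have hM : ∀ y ∈ Set.Icc a b, |(F - G) y| ≤ M :=
    fun y hy => le_csSup (hFBV.bddAbove_abs_sub hGBV) ⟨y, hy, rfl⟩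
  have hM₀ : 0 ≤ M := (abs_nonneg _).trans (hM a ⟨le_rfl, hab⟩)
  refine le_of_forall_le_add_mul_of_isGLB_zero hinf (mul_nonneg zero_le_two hM₀) fun x hx => ?_
  have hsums := ((hI₁.tendsto_RSSum_uniformPartition hab).sub
    (hI₂.tendsto_RSSum_uniformPartition hab)).abs
  refine le_of_tendsto' hsums fun n => ?_
  rw [RSSum_sub]
  refine (abs_RSSum_le hhBV hx hM (monotone_uniformPartition hab n)
    fun i hi => uniformPartition_mem_Icc hab hi).trans_eq ?_
  rw [abs_of_nonneg (hinf.1 ⟨x, hx, rfl⟩)]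
  ring
end

section
/- Let T : A → ℝ be a continuous convex functional on an open subset A of a normed vector space. Then the subdifferential ∂T(a) = {D ∈ Y* : T(b) ≥ T(a) + D(b − a) for all b ∈ A} is nonempty for every a ∈ A. -/
open Set

/-- **Nonemptiness of the subdifferential.**  A continuous convex functional on an open
subset of a normed vector space has a nonempty subdifferential at every point. -/
theorem subdifferential_nonempty
    {Y : Type*} [NormedAddCommGroup Y] [NormedSpace ℝ Y]
    (A : Set Y) (hA : IsOpen A)
    (T : Y → ℝ) (hconv : ConvexOn ℝ A T) (hcont : ContinuousOn T A)
    (a : Y) (ha : a ∈ A) :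
    ∃ D : Y →L[ℝ] ℝ, ∀ b ∈ A, T a + D (b - a) ≤ T b := by
  -- strict epigraph
  have hSconv : Convex ℝ {p : Y × ℝ | p.1 ∈ A ∧ T p.1 < p.2} :=
    hconv.convex_strict_epigraph
  have hSopen : IsOpen {p : Y × ℝ | p.1 ∈ A ∧ T p.1 < p.2} := by
    have h1 : ContinuousOn (fun p : Y × ℝ => p.2 - T p.1)
        ((A : Set Y) ×ˢ (univ : Set ℝ)) := by
      apply ContinuousOn.sub continuousOn_snd
      exact hcont.comp continuousOn_fst (fun p hp => hp.1)
    have h2 := h1.isOpen_inter_preimage (hA.prod isOpen_univ) (isOpen_Ioi (a := (0:ℝ)))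
    convert h2 using 1
    ext p
    simp only [mem_setOf_eq, mem_inter_iff, mem_prod, mem_univ, and_true, mem_preimage,
      mem_Ioi, sub_pos]
  have hnot : ((a, T a) : Y × ℝ) ∉ {p : Y × ℝ | p.1 ∈ A ∧ T p.1 < p.2} :=
    fun h => lt_irrefl _ h.2
  obtain ⟨f, hf⟩ := geometric_hahn_banach_open_point hSconv hSopen hnot
  set g : Y →L[ℝ] ℝ := f.comp (ContinuousLinearMap.inl ℝ Y ℝ) with hg
  set c : ℝ := f (0, 1) with hc
  have hdecomp : ∀ (y : Y) (t : ℝ), f (y, t) = g y + t * c := by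
    intro y t
    have h3 : ((y, t) : Y × ℝ) = (y, (0:ℝ)) + t • ((0:Y), (1:ℝ)) := by
      simp [Prod.ext_iff]
    rw [h3, map_add, map_smul]
    simp only [hg, hc, ContinuousLinearMap.coe_comp', Function.comp_apply,
      ContinuousLinearMap.inl_apply, smul_eq_mul]
  have hcneg : c < 0 := by
    have h1 : ((a, T a + 1) : Y × ℝ) ∈ {p : Y × ℝ | p.1 ∈ A ∧ T p.1 < p.2} :=
      ⟨ha, by norm_num⟩
    have h2 := hf _ h1
    rw [hdecomp, hdecomp] at h2
    nlinarith [h2]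
  have hc0 : c ≠ 0 := ne_of_lt hcneg
  -- key inequality
  have key : ∀ b ∈ A, g b + T b * c ≤ g a + T a * c := by
    intro b hb
    have hall : ∀ ε > (0:ℝ), g b + T b * c ≤ g a + T a * c + ε := by
      intro ε hε
      have hcpos : (0:ℝ) < -c := by linarith
      have ht : T b < T b + ε / (-c) := by
        have := div_pos hε hcpos; linarith
      have hmem : ((b, T b + ε / (-c)) : Y × ℝ) ∈ {p : Y × ℝ | p.1 ∈ A ∧ T p.1 < p.2} :=
        ⟨hb, ht⟩
      have h2 := hf _ hmem
      rw [hdecomp, hdecomp] at h2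
      have he : (ε / (-c)) * c = -ε := by
        field_simp
      nlinarith [h2, he]
    linarith [le_of_forall_pos_le_add hall]
  refine ⟨(-c)⁻¹ • g, fun b hb => ?_⟩
  have hk := key b hb
  have hcpos : (0:ℝ) < -c := by linarith
  have hinv : (-c)⁻¹ * (-c) = 1 := inv_mul_cancel₀ (ne_of_gt hcpos)
  have hgsub : g (b - a) = g b - g a := map_sub g b a
  have hinvpos : (0:ℝ) < (-c)⁻¹ := inv_pos.mpr hcpos
  simp only [ContinuousLinearMap.smul_apply, smul_eq_mul, hgsub]
  have h4 : g b - g a ≤ (T b - T a) * (-c) := by nlinarith [hk]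
  have h5 : (-c)⁻¹ * (g b - g a) ≤ T b - T a := by
    calc (-c)⁻¹ * (g b - g a) ≤ (-c)⁻¹ * ((T b - T a) * (-c)) :=
          mul_le_mul_of_nonneg_left h4 hinvpos.le
      _ = T b - T a := by field_simp
  linarith
end

section
/- Let T : A → ℝ be continuous and convex on an open subset A of a normed vector space. Then T is Gateaux differentiable at a ∈ A if and only if the subdifferential ∂T(a) is a singleton. -/
open Filter Set

/-! For a convex `f` and `x` in the interior of its domain, the one-sided directional derivative
`p v = lim_{t → 0⁺} (f (x + t • v) - f x) / t` exists, is sublinear, is bounded above near `0`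
when `f` is continuous at `x`, and dominates every subgradient; the two-sided limit exists exactly
when `p (-v) = -p v`. A Gateaux derivative is therefore a subgradient lying above every other one,
hence equal to it. Conversely, Hahn–Banach gives for each `v` a linear `g ≤ p` with `g v = p v`,
and such a `g` is automatically continuous and a subgradient; if the subdifferential is `{D}`,
this forces `p = D`, which is linear. -/

open Topology

theorem exists_linearMap_le_sublinear_apply_eq {E : Type*} [AddCommGroup E] [Module ℝ E]
    (N : E → ℝ) (N_hom : ∀ c : ℝ, 0 < c → ∀ x, N (c • x) = c * N x)
    (N_add : ∀ x y, N (x + y) ≤ N x + N y) (v : E) :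
    ∃ g : E →ₗ[ℝ] ℝ, (∀ x, g x ≤ N x) ∧ g v = N v := by
  have N_zero : N 0 = 0 := by
    have := N_hom 2 two_pos 0
    rw [smul_zero] at this
    linarith
  have N_neg : -N v ≤ N (-v) := by
    have := N_add v (-v)
    rw [add_neg_cancel, N_zero] at this
    linarith
  let f : E →ₗ.[ℝ] ℝ := LinearPMap.mkSpanSingleton' v (N v) fun c hc => by
    rcases smul_eq_zero.1 hc with rfl | rfl
    · simp
    · simp [N_zero]
  have f_le : ∀ y : f.domain, f y ≤ N y := by
    rintro ⟨_, hy⟩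
    obtain ⟨c, rfl⟩ := Submodule.mem_span_singleton.1 hy
    rw [LinearPMap.mkSpanSingleton'_apply, RingHom.id_apply, smul_eq_mul]
    change c * N v ≤ N (c • v)
    rcases lt_trichotomy c 0 with hc | rfl | hc
    · rw [← neg_neg c, neg_smul, ← smul_neg, N_hom _ (neg_pos.2 hc)]
      nlinarith
    · simp [N_zero]
    · rw [N_hom c hc]
  obtain ⟨g, hgf, hgN⟩ := exists_extension_of_le_sublinear f N N_hom N_add f_le
  exact ⟨g, hgN, (hgf ⟨v, Submodule.mem_span_singleton_self v⟩).trans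
    (LinearPMap.mkSpanSingleton'_apply_self ..)⟩

theorem LinearMap.continuous_of_eventually_le {E : Type*} [NormedAddCommGroup E]
    [NormedSpace ℝ E] (g : E →ₗ[ℝ] ℝ) {c : ℝ} (h : ∀ᶠ v in 𝓝 0, g v ≤ c) : Continuous g := by
  have h_neg : ∀ᶠ v in 𝓝 (0 : E), g (-v) ≤ c :=
    (continuous_neg.tendsto' 0 0 neg_zero).eventually h
  refine g.toAddMonoidHom.continuous_of_isBounded_nhds_zero (h.and h_neg)
    ((Metric.isBounded_Icc (-c) c).subset ?_)
  rintro _ ⟨v, ⟨hv, hv_neg⟩, rfl⟩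
  rw [map_neg] at hv_neg
  exact ⟨neg_le.1 hv_neg, hv⟩

theorem eq_of_forall_apply_le {F M G : Type*} [AddCommGroup M] [AddCommGroup G] [PartialOrder G]
    [IsOrderedAddMonoid G] [FunLike F M G] [AddMonoidHomClass F M G] {f g : F}
    (h : ∀ x, f x ≤ g x) : f = g :=
  DFunLike.ext f g fun x => (h x).antisymm <| by simpa only [map_neg, neg_le_neg_iff] using h (-x)

section ConvexOn

variable {E : Type*} [NormedAddCommGroup E] [NormedSpace ℝ E]

def subdifferential (s : Set E) (f : E → ℝ) (x : E) : Set (E →L[ℝ] ℝ) :=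
  {φ | ∀ y ∈ s, f x + φ (y - x) ≤ f y}

noncomputable def rightLineDeriv (f : E → ℝ) (x v : E) : ℝ :=
  derivWithin (fun t : ℝ => f (x + t • v)) (Ioi 0) 0

variable {s : Set E} {f : E → ℝ} {x v : E}

theorem HasLineDerivAt.rightLineDeriv_eq {f' : ℝ} (h : HasLineDerivAt ℝ f f' x v) :
    rightLineDeriv f x v = f' :=
  h.hasDerivWithinAt.derivWithin (uniqueDiffWithinAt_Ioi 0)

theorem rightLineDeriv_smul {c : ℝ} (hc : 0 < c) :
    rightLineDeriv f x (c • v) = c * rightLineDeriv f x v := by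
  have := derivWithin_comp_mul_left c (fun t : ℝ => f (x + t • v)) (Ioi 0) 0
  rw [LinearOrderedField.smul_Ioi hc, mul_zero, smul_eq_mul] at this
  unfold rightLineDeriv
  rw [← this]
  simp only [smul_smul, mul_comm]

theorem derivWithin_Iio_eq_neg_rightLineDeriv :
    derivWithin (fun t : ℝ => f (x + t • v)) (Iio 0) 0 = -rightLineDeriv f x (-v) := by
  have := derivWithin_comp_neg (f := fun t : ℝ => f (x + t • -v)) (s := Iio 0) (x := 0)
  simpa only [rightLineDeriv, smul_neg, neg_smul, neg_neg, Set.neg_Iio, neg_zero] using this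

theorem eventually_add_smul_mem (hs : s ∈ 𝓝 x) (v : E) : ∀ᶠ t in 𝓝 (0 : ℝ), x + t • v ∈ s :=
  (Continuous.tendsto' (by fun_prop) 0 x (by simp)).eventually hs

theorem ConvexOn.comp_line (hf : ConvexOn ℝ s f) (x v : E) :
    ConvexOn ℝ ((fun t : ℝ => x + t • v) ⁻¹' s) (fun t => f (x + t • v)) :=
  (hf.translate_right x).comp_linearMap (LinearMap.toSpanSingleton ℝ E v)

theorem hasLineDerivAt_iff_tendsto_div {f' : ℝ} :
    HasLineDerivAt ℝ f f' x v ↔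
      Tendsto (fun t : ℝ => (f (x + t • v) - f x) / t) (𝓝[≠] 0) (𝓝 f') := by
  simp only [hasLineDerivAt_iff_tendsto_slope_zero, smul_eq_mul, inv_mul_eq_div]

theorem ConvexOn.tendsto_rightLineDeriv (hf : ConvexOn ℝ s f) (hs : s ∈ 𝓝 x) (v : E) :
    Tendsto (fun t : ℝ => (f (x + t • v) - f x) / t) (𝓝[>] 0) (𝓝 (rightLineDeriv f x v)) := by
  have := (hf.comp_line x v).hasDerivWithinAt_rightDeriv_of_mem_interior
    (mem_interior_iff_mem_nhds.2 (eventually_add_smul_mem hs v))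
  rw [hasDerivWithinAt_iff_tendsto_slope' self_notMem_Ioi] at this
  exact this.congr fun t => by simp [slope_def_field]

theorem ConvexOn.rightLineDeriv_le_sub (hf : ConvexOn ℝ s f) (hs : s ∈ 𝓝 x) (hv : x + v ∈ s) :
    rightLineDeriv f x v ≤ f (x + v) - f x := by
  have := (hf.comp_line x v).rightDeriv_le_slope_of_mem_interior
    (mem_interior_iff_mem_nhds.2 (eventually_add_smul_mem hs v)) (y := 1) (by simpa using hv)
    one_pos
  simpa [rightLineDeriv, slope_def_field] using this

theorem ConvexOn.le_rightLineDeriv_of_mem_subdifferential (hf : ConvexOn ℝ s f) (hs : s ∈ 𝓝 x)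
    {φ : E →L[ℝ] ℝ} (hφ : φ ∈ subdifferential s f x) (v : E) : φ v ≤ rightLineDeriv f x v := by
  refine ge_of_tendsto (hf.tendsto_rightLineDeriv hs v) ?_
  filter_upwards [self_mem_nhdsWithin, nhdsWithin_le_nhds (eventually_add_smul_mem hs v)]
    with t (ht : 0 < t) hmem
  have := hφ _ hmem
  rw [add_sub_cancel_left, map_smul, smul_eq_mul] at this
  rw [le_div_iff₀ ht]
  linarith

theorem ConvexOn.rightLineDeriv_add_le (hf : ConvexOn ℝ s f) (hs : s ∈ 𝓝 x) (v w : E) :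
    rightLineDeriv f x (v + w) ≤ rightLineDeriv f x v + rightLineDeriv f x w := by
  have key : ∀ᶠ t in 𝓝[>] (0 : ℝ), (f (x + t • (v + w)) - f x) / t ≤
      ((f (x + t • (2 : ℝ) • v) - f x) / t + (f (x + t • (2 : ℝ) • w) - f x) / t) / 2 := by
    filter_upwards [self_mem_nhdsWithin,
      nhdsWithin_le_nhds (eventually_add_smul_mem hs ((2 : ℝ) • v)),
      nhdsWithin_le_nhds (eventually_add_smul_mem hs ((2 : ℝ) • w))] with t (ht : 0 < t) hv hw
    have hmid : x + t • (v + w) =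
        (1 / 2 : ℝ) • (x + t • (2 : ℝ) • v) + (1 / 2 : ℝ) • (x + t • (2 : ℝ) • w) := by
      module
    have := hf.2 hv hw (by norm_num) (by norm_num) (by norm_num : (1 / 2 : ℝ) + 1 / 2 = 1)
    rw [← hmid, smul_eq_mul, smul_eq_mul] at this
    rw [← add_div, div_div, div_le_div_iff₀ ht (by positivity)]
    nlinarith
  have := le_of_tendsto_of_tendsto (hf.tendsto_rightLineDeriv hs (v + w))
    (((hf.tendsto_rightLineDeriv hs _).add (hf.tendsto_rightLineDeriv hs _)).div_const 2) key
  rwa [rightLineDeriv_smul two_pos, rightLineDeriv_smul two_pos, ← mul_add,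
    mul_div_cancel_left₀ _ two_ne_zero] at this

theorem ConvexOn.eventually_rightLineDeriv_le (hf : ConvexOn ℝ s f) (hs : s ∈ 𝓝 x)
    (hc : ContinuousAt f x) : ∀ᶠ v in 𝓝 0, rightLineDeriv f x v ≤ 1 := by
  have hx : Tendsto (x + ·) (𝓝 (0 : E)) (𝓝 x) := by
    simpa using (continuous_const_add x).tendsto 0
  filter_upwards [hx.eventually hs, hx.eventually (hc.eventually (eventually_lt_nhds
    (lt_add_one (f x))))] with v hv hlt
  linarith [hf.rightLineDeriv_le_sub hs hv]

theorem ConvexOn.exists_mem_subdifferential_apply_eq_rightLineDeriv (hf : ConvexOn ℝ s f)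
    (hs : s ∈ 𝓝 x) (hc : ContinuousAt f x) (v : E) :
    ∃ φ ∈ subdifferential s f x, φ v = rightLineDeriv f x v := by
  obtain ⟨g, hg_le, hgv⟩ := exists_linearMap_le_sublinear_apply_eq (rightLineDeriv f x)
    (fun _ hc _ => rightLineDeriv_smul hc) (hf.rightLineDeriv_add_le hs) v
  have hg : Continuous g := g.continuous_of_eventually_le
    ((hf.eventually_rightLineDeriv_le hs hc).mono fun w hw => (hg_le w).trans hw)
  refine ⟨⟨g, hg⟩, fun y hy => ?_, hgv⟩
  have := (hg_le (y - x)).trans (hf.rightLineDeriv_le_sub hs (by simpa using hy))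
  rw [add_sub_cancel] at this
  change f x + g (y - x) ≤ f y
  linarith

theorem ConvexOn.hasLineDerivAt_of_rightLineDeriv_neg (hf : ConvexOn ℝ s f) (hs : s ∈ 𝓝 x)
    (h : rightLineDeriv f x (-v) = -rightLineDeriv f x v) :
    HasLineDerivAt ℝ f (rightLineDeriv f x v) x v := by
  have h0 := mem_interior_iff_mem_nhds.2 (eventually_add_smul_mem hs v)
  have hright := (hf.comp_line x v).hasDerivWithinAt_rightDeriv_of_mem_interior h0
  have hleft := (hf.comp_line x v).hasDerivWithinAt_leftDeriv_of_mem_interior h0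
  rw [derivWithin_Iio_eq_neg_rightLineDeriv, h, neg_neg] at hleft
  have := hleft.Iic_of_Iio.union hright.Ici_of_Ioi
  rwa [Iic_union_Ici, hasDerivWithinAt_univ] at this

theorem ConvexOn.mem_subdifferential_of_hasLineDerivAt (hf : ConvexOn ℝ s f) (hs : s ∈ 𝓝 x)
    {φ : E →L[ℝ] ℝ} (hφ : ∀ v, HasLineDerivAt ℝ f (φ v) x v) : φ ∈ subdifferential s f x :=
  fun y hy => by
    have := hf.rightLineDeriv_le_sub hs (v := y - x) (by simpa using hy)
    rw [(hφ _).rightLineDeriv_eq, add_sub_cancel] at this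
    linarith

end ConvexOn

/-- **Gateaux differentiability and singleton subdifferentials.**  A continuous convex
functional on an open subset of a normed vector space is Gateaux differentiable at a point
if and only if its subdifferential there is a singleton. -/
theorem gateaux_iff_subdifferential_singleton
    {Y : Type*} [NormedAddCommGroup Y] [NormedSpace ℝ Y]
    (A : Set Y) (hA : IsOpen A)
    (T : Y → ℝ) (hconv : ConvexOn ℝ A T) (hcont : ContinuousOn T A)
    (a : Y) (ha : a ∈ A) :
    (∃ D : Y →L[ℝ] ℝ, ∀ H : Y,
        Tendsto (fun t : ℝ => (T (a + t • H) - T a) / t) (nhdsWithin 0 {0}ᶜ) (nhds (D H)))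
      ↔
    (∃ D : Y →L[ℝ] ℝ, {D' : Y →L[ℝ] ℝ | ∀ b ∈ A, T a + D' (b - a) ≤ T b} = {D}) := by
  have hs : A ∈ 𝓝 a := hA.mem_nhds ha
  simp only [← hasLineDerivAt_iff_tendsto_div]
  change _ ↔ ∃ D, subdifferential A T a = {D}
  constructor
  · rintro ⟨D, hD⟩
    refine ⟨D, eq_singleton_iff_unique_mem.2 ⟨hconv.mem_subdifferential_of_hasLineDerivAt hs hD,
      fun φ hφ => eq_of_forall_apply_le fun H => ?_⟩⟩
    exact (hconv.le_rightLineDeriv_of_mem_subdifferential hs hφ H).trans_eq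
      (hD H).rightLineDeriv_eq
  · rintro ⟨D, hD⟩
    have hp : ∀ H, rightLineDeriv T a H = D H := fun H => by
      obtain ⟨φ, hφ, hφH⟩ :=
        hconv.exists_mem_subdifferential_apply_eq_rightLineDeriv hs (hcont.continuousAt hs) H
      rw [← hφH, (eq_singleton_iff_unique_mem.1 hD).2 φ hφ]
    refine ⟨D, fun H => ?_⟩
    rw [← hp]
    exact hconv.hasLineDerivAt_of_rightLineDeriv_neg hs (by rw [hp, hp, map_neg])
end

section
/- In the single-item auction with M ≥ 2 bidders and expected profit π(r,F) = ∫_r^{θ̄} θ dF_{(2;M)}(θ) from reserve price r (interpreted as ∫ 1{θ ≥ r} dF_{(2;M)}), the profit is Lipschitz in F: |π(r,F) − π(r,G)| ≤ 2M(M−1)·‖F − G‖_∞ for all r ∈ Θ, and hence the auction value function Π(F) = sup_{r∈Θ} π(r,F) is Lipschitz with the same constant 2M(M−1). -/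
/-!
Write `F_{(2;M)} = φ ∘ F` with `φ x = M x^{M-1} (1 - x) + x^M = M x^{M-1} - (M - 1) x^M`; on
`[0, 1]` each power `x^k` is `k`-Lipschitz, so `φ` is `2M(M-1)`-Lipschitz. The Riemann–Stieltjes
integral of `1{θ ≥ r}` against `g` is the limit of its uniform left Riemann sums, and each such sum
telescopes to `g θ̄ - g t` for a grid point `t`. For `g = φ ∘ F - φ ∘ G`, which vanishes at `θ̄`
because `F θ̄ = G θ̄ = 1`, this bounds `|π(r,F) - π(r,G)|`; for `g = φ ∘ F` it bounds the profits,
so both suprema are genuine and differ by at most the pointwise bound.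
-/

open Set

open Filter Topology Finset

lemma abs_pow_sub_pow_le_of_mem_Icc {a b : ℝ} (ha : a ∈ Icc (0 : ℝ) 1) (hb : b ∈ Icc (0 : ℝ) 1)
    (n : ℕ) : |a ^ n - b ^ n| ≤ n * |a - b| := by
  have hmax : max |a| |b| ^ (n - 1) ≤ 1 :=
    pow_le_one₀ (by positivity) (max_le (abs_le.2 ⟨by linarith [ha.1], ha.2⟩)
      (abs_le.2 ⟨by linarith [hb.1], hb.2⟩))
  calc |a ^ n - b ^ n| ≤ |a - b| * n * max |a| |b| ^ (n - 1) := abs_pow_sub_pow_le ..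
    _ ≤ |a - b| * n * 1 := by gcongr
    _ = n * |a - b| := by ring

/-- The CDF of the second-highest of `M` i.i.d. draws, as a function of the common CDF value. -/
def secondHighestCDF (M : ℕ) (x : ℝ) : ℝ := M * x ^ (M - 1) * (1 - x) + x ^ M

lemma abs_secondHighestCDF_sub_le {M : ℕ} (hM : 1 ≤ M) {a b : ℝ} (ha : a ∈ Icc (0 : ℝ) 1)
    (hb : b ∈ Icc (0 : ℝ) 1) :
    |secondHighestCDF M a - secondHighestCDF M b| ≤ 2 * M * (M - 1) * |a - b| := by
  obtain ⟨m, rfl⟩ : ∃ m, M = m + 1 := ⟨M - 1, by omega⟩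
  have hpoly : ∀ x, secondHighestCDF (m + 1) x = (m + 1) * x ^ m - m * x ^ (m + 1) := by
    intro x
    simp only [secondHighestCDF, Nat.add_sub_cancel, Nat.cast_succ]
    ring
  have hm := abs_pow_sub_pow_le_of_mem_Icc ha hb m
  have hm1 := abs_pow_sub_pow_le_of_mem_Icc ha hb (m + 1)
  push_cast at hm1 ⊢
  rw [hpoly, hpoly]
  calc |(m + 1) * a ^ m - m * a ^ (m + 1) - ((m + 1) * b ^ m - m * b ^ (m + 1))|
      = |(m + 1) * (a ^ m - b ^ m) - m * (a ^ (m + 1) - b ^ (m + 1))| := by ring_nf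
    _ ≤ (m + 1) * |a ^ m - b ^ m| + m * |a ^ (m + 1) - b ^ (m + 1)| := by
      refine (abs_sub _ _).trans_eq ?_
      rw [abs_mul, abs_mul, abs_of_nonneg (by positivity : (0 : ℝ) ≤ m + 1),
        abs_of_nonneg (by positivity : (0 : ℝ) ≤ m)]
    _ ≤ (m + 1) * (m * |a - b|) + m * ((m + 1) * |a - b|) := by gcongr
    _ = 2 * (m + 1) * (m + 1 - 1) * |a - b| := by ring

lemma exists_sum_range_ite_sub_eq {P : ℕ → Prop} [DecidablePred P] (hP : Monotone P)
    (u : ℕ → ℝ) (n : ℕ) :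
    ∃ m ≤ n, ∑ i ∈ range n, (if P i then u (i + 1) - u i else 0) = u n - u m := by
  induction n with
  | zero => exact ⟨0, le_rfl, by simp⟩
  | succ n ih =>
    rw [sum_range_succ]
    by_cases hn : P n
    · obtain ⟨m, hm, hsum⟩ := ih
      exact ⟨m, by omega, by rw [hsum, if_pos hn]; ring⟩
    · have hzero : ∀ i ∈ range n, (if P i then u (i + 1) - u i else 0) = 0 := fun i hi =>
        if_neg fun hi' => hn (hP (mem_range.1 hi).le hi')
      exact ⟨n + 1, le_rfl, by rw [sum_eq_zero hzero, if_neg hn]; ring⟩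

noncomputable def gridPoint (a b : ℝ) (n k : ℕ) : ℝ := a + k * ((b - a) / n)

noncomputable def gridSum (f g : ℝ → ℝ) (a b : ℝ) (n : ℕ) : ℝ :=
  ∑ i ∈ range n, f (gridPoint a b n i) * (g (gridPoint a b n (i + 1)) - g (gridPoint a b n i))

section gridPoint

variable {a b : ℝ} {n : ℕ}

lemma gridPoint_self (hn : n ≠ 0) : gridPoint a b n n = b := by
  rw [gridPoint, mul_div_cancel₀ _ (Nat.cast_ne_zero.2 hn), add_sub_cancel]

lemma gridPoint_mono (hab : a ≤ b) : Monotone (gridPoint a b n) := fun i j hij => by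
  simp only [gridPoint]
  gcongr

lemma gridPoint_mem_Icc (hab : a ≤ b) (hn : n ≠ 0) {k : ℕ} (hk : k ≤ n) :
    gridPoint a b n k ∈ Icc a b := by
  refine ⟨?_, (gridPoint_mono hab hk).trans_eq (gridPoint_self hn)⟩
  simpa [gridPoint] using gridPoint_mono (n := n) hab k.zero_le

lemma gridPoint_succ_sub (k : ℕ) :
    gridPoint a b n (k + 1) - gridPoint a b n k = (b - a) / n := by
  simp only [gridPoint]
  push_cast
  ring

end gridPoint

lemma gridSum_sub (f g g' : ℝ → ℝ) (a b : ℝ) :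
    gridSum f (fun t => g t - g' t) a b = gridSum f g a b - gridSum f g' a b := by
  ext n
  simp only [gridSum, Pi.sub_apply, ← sum_sub_distrib]
  exact sum_congr rfl fun i _ => by ring

lemma HasRSIntegral.tendsto_gridSum {f g : ℝ → ℝ} {a b I : ℝ} (h : HasRSIntegral f g a b I)
    (hab : a ≤ b) : Tendsto (gridSum f g a b) atTop (𝓝 I) := by
  rw [Metric.tendsto_atTop]
  intro ε hε
  obtain ⟨δ, hδ, hsum⟩ := h ε hε
  obtain ⟨N, hN⟩ := exists_nat_gt ((b - a) / δ)
  have hN0 : (0 : ℝ) < N := lt_of_le_of_lt (div_nonneg (by linarith) hδ.le) hN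
  refine ⟨N, fun n hn => ?_⟩
  have hn0 : (0 : ℝ) < n := hN0.trans_le (by exact_mod_cast hn)
  have hmesh : (b - a) / n < δ := by
    rw [div_lt_iff₀ hn0]
    rw [div_lt_iff₀ hδ] at hN
    nlinarith [(Nat.cast_le (α := ℝ)).2 hn]
  have := hsum n (fun j => gridPoint a b n j) (fun i => gridPoint a b n i)
    (fun i j hij => gridPoint_mono hab hij) (by simp [gridPoint])
    (gridPoint_self (by exact_mod_cast hn0.ne'))
    (fun i => ⟨le_rfl, gridPoint_mono hab (Nat.le_succ _), by
      simpa only [Fin.val_succ, Fin.val_castSucc, gridPoint_succ_sub] using hmesh⟩)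
  rw [Real.dist_eq, gridSum, ← Fin.sum_univ_eq_sum_range]
  simpa only [RSSum, Fin.val_succ, Fin.val_castSucc] using this

lemma abs_gridSum_indicator_le {g : ℝ → ℝ} {a b c : ℝ} (hab : a ≤ b) (r : ℝ) {n : ℕ}
    (hn : n ≠ 0) (hg : ∀ t ∈ Icc a b, |g b - g t| ≤ c) :
    |gridSum (fun t => if r ≤ t then (1 : ℝ) else 0) g a b n| ≤ c := by
  have hP : Monotone fun i => r ≤ gridPoint a b n i := fun i j hij hi =>
    hi.trans (gridPoint_mono hab hij)
  obtain ⟨m, hm, hsum⟩ := exists_sum_range_ite_sub_eq hP (fun k => g (gridPoint a b n k)) n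
  simp only [gridSum, ite_mul, one_mul, zero_mul]
  rw [hsum, gridPoint_self hn]
  exact hg _ (gridPoint_mem_Icc hab hn hm)

lemma abs_le_of_tendsto_gridSum_indicator {g : ℝ → ℝ} {a b c I : ℝ} (hab : a ≤ b) {r : ℝ}
    (hI : Tendsto (gridSum (fun t => if r ≤ t then (1 : ℝ) else 0) g a b) atTop (𝓝 I))
    (hg : ∀ t ∈ Icc a b, |g b - g t| ≤ c) : |I| ≤ c :=
  le_of_tendsto hI.abs (eventually_atTop.2 ⟨1, fun n hn =>
    abs_gridSum_indicator_le hab r (by omega) hg⟩)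

lemma abs_csSup_image_sub_csSup_image_le {α : Type*} {S : Set α} {f g : α → ℝ} {C : ℝ}
    (hS : S.Nonempty) (hf : BddAbove (f '' S)) (hg : BddAbove (g '' S))
    (hfg : ∀ x ∈ S, |f x - g x| ≤ C) : |sSup (f '' S) - sSup (g '' S)| ≤ C := by
  have key : ∀ {f g : α → ℝ}, BddAbove (g '' S) → (∀ x ∈ S, f x - g x ≤ C) →
      sSup (f '' S) - sSup (g '' S) ≤ C := fun hg hfg => by
    rw [sub_le_iff_le_add]
    refine csSup_le (hS.image _) (forall_mem_image.2 fun x hx => ?_)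
    linarith [hfg x hx, le_csSup hg (mem_image_of_mem _ hx)]
  exact abs_sub_le_iff.2 ⟨key hg fun x hx => (abs_sub_le_iff.1 (hfg x hx)).1,
    key hf fun x hx => (abs_sub_le_iff.1 (hfg x hx)).2⟩

lemma two_mul_mul_sub_one_nonneg {M : ℕ} (hM : 1 ≤ M) : (0 : ℝ) ≤ 2 * M * (M - 1) := by
  have : (1 : ℝ) ≤ M := by exact_mod_cast hM
  positivity

section profit

variable {a b : ℝ} {M : ℕ} {r : ℝ}

lemma abs_profit_le (hab : a ≤ b) (hM : 1 ≤ M) {H : ℝ → ℝ} (hH : ∀ t, H t ∈ Icc (0 : ℝ) 1)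
    {I : ℝ} (h : HasRSIntegral (fun t => if r ≤ t then (1 : ℝ) else 0)
      (fun t => secondHighestCDF M (H t)) a b I) :
    |I| ≤ 2 * M * (M - 1) := by
  refine abs_le_of_tendsto_gridSum_indicator hab (h.tendsto_gridSum hab) fun t _ => ?_
  calc |secondHighestCDF M (H b) - secondHighestCDF M (H t)|
      ≤ 2 * M * (M - 1) * |H b - H t| := abs_secondHighestCDF_sub_le hM (hH b) (hH t)
    _ ≤ 2 * M * (M - 1) := mul_le_of_le_one_right (two_mul_mul_sub_one_nonneg hM)
      (abs_sub_le_of_nonneg_of_le (hH b).1 (hH b).2 (hH t).1 (hH t).2)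

lemma abs_profit_sub_le (hab : a ≤ b) (hM : 1 ≤ M) {F G : ℝ → ℝ}
    (hF : ∀ t, F t ∈ Icc (0 : ℝ) 1) (hG : ∀ t, G t ∈ Icc (0 : ℝ) 1) (hFG : F b = G b) {K : ℝ}
    (hK : ∀ t ∈ Icc a b, |F t - G t| ≤ K) {I I' : ℝ}
    (h : HasRSIntegral (fun t => if r ≤ t then (1 : ℝ) else 0)
      (fun t => secondHighestCDF M (F t)) a b I)
    (h' : HasRSIntegral (fun t => if r ≤ t then (1 : ℝ) else 0)
      (fun t => secondHighestCDF M (G t)) a b I') :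
    |I - I'| ≤ 2 * M * (M - 1) * K := by
  refine abs_le_of_tendsto_gridSum_indicator
    (g := fun t => secondHighestCDF M (F t) - secondHighestCDF M (G t)) (r := r) hab ?_
    fun t ht => ?_
  · rw [gridSum_sub]
    exact (h.tendsto_gridSum hab).sub (h'.tendsto_gridSum hab)
  · rw [hFG, sub_self, zero_sub, abs_neg]
    exact (abs_secondHighestCDF_sub_le hM (hF t) (hG t)).trans
      (mul_le_mul_of_nonneg_left (hK t ht) (two_mul_mul_sub_one_nonneg hM))

end profit

theorem auction_profit_lipschitz_general
    (θl θu : ℝ) (hθ : θl ≤ θu) (M : ℕ) (hM : 2 ≤ M)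
    (F G : ℝ → ℝ)
    (hF_range : ∀ t, 0 ≤ F t ∧ F t ≤ 1)
    (hF₁ : ∀ t, θu ≤ t → F t = 1)
    (hG_range : ∀ t, 0 ≤ G t ∧ G t ≤ 1)
    (hG₁ : ∀ t, θu ≤ t → G t = 1)
    (π π' : ℝ → ℝ)
    -- `π r F = ∫_{θ̲}^{θ̄} 1{θ ≥ r} dF_{(2;M)}(θ)` (Riemann–Stieltjes)
    (hπ : ∀ r ∈ Set.Icc θl θu,
      HasRSIntegral (fun t => if r ≤ t then (1 : ℝ) else 0)
        (fun t => M * F t ^ (M - 1) * (1 - F t) + F t ^ M) θl θu (π r))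
    (hπ' : ∀ r ∈ Set.Icc θl θu,
      HasRSIntegral (fun t => if r ≤ t then (1 : ℝ) else 0)
        (fun t => M * G t ^ (M - 1) * (1 - G t) + G t ^ M) θl θu (π' r)) :
    (∀ r ∈ Set.Icc θl θu,
      |π r - π' r| ≤ 2 * M * (M - 1) * sSup ((fun t => |F t - G t|) '' Set.Icc θl θu)) ∧
    |sSup (π '' Set.Icc θl θu) - sSup (π' '' Set.Icc θl θu)| ≤
      2 * M * (M - 1) * sSup ((fun t => |F t - G t|) '' Set.Icc θl θu) := by
  have hM1 : 1 ≤ M := by omega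
  have hK : ∀ t ∈ Icc θl θu, |F t - G t| ≤ sSup ((fun t => |F t - G t|) '' Icc θl θu) :=
    fun t ht => le_csSup ⟨1, forall_mem_image.2 fun s _ =>
      abs_sub_le_of_nonneg_of_le (hF_range s).1 (hF_range s).2 (hG_range s).1 (hG_range s).2⟩
      (mem_image_of_mem _ ht)
  have hdiff := fun r hr => abs_profit_sub_le hθ hM1 hF_range hG_range
    ((hF₁ θu le_rfl).trans (hG₁ θu le_rfl).symm) hK (hπ r hr) (hπ' r hr)
  have hbdd : ∀ {H p : ℝ → ℝ}, (∀ t, H t ∈ Icc (0 : ℝ) 1) →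
      (∀ r ∈ Icc θl θu, HasRSIntegral (fun t => if r ≤ t then (1 : ℝ) else 0)
        (fun t => secondHighestCDF M (H t)) θl θu (p r)) → BddAbove (p '' Icc θl θu) :=
    fun hH hp => ⟨_, forall_mem_image.2 fun r hr =>
      (le_abs_self _).trans (abs_profit_le hθ hM1 hH (hp r hr))⟩
  exact ⟨hdiff, abs_csSup_image_sub_csSup_image_le ⟨θl, le_rfl, hθ⟩ (hbdd hF_range hπ)
    (hbdd hG_range hπ') hdiff⟩

/-- **Lipschitz continuity of auction profit and of the auction value function.**  With
`M ≥ 2` bidders and profit from reserve price `r` given by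
`π(r,F) = ∫ 1{θ ≥ r} dF_{(2;M)}`, where `F_{(2;M)}(θ) = M F(θ)^{M−1}(1−F(θ)) + F(θ)^M`,
one has `|π(r,F) − π(r,G)| ≤ 2M(M−1)‖F − G‖_∞` for all `r ∈ Θ`, and the value function
`Π(F) = sup_r π(r,F)` is Lipschitz with the same constant. -/
theorem auction_profit_lipschitz
    (θl θu : ℝ) (hθ : θl ≤ θu) (M : ℕ) (hM : 2 ≤ M)
    (F G : ℝ → ℝ)
    (hF_mono : Monotone F) (hF_range : ∀ t, 0 ≤ F t ∧ F t ≤ 1)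
    (hF₀ : ∀ t, t < θl → F t = 0) (hF₁ : ∀ t, θu ≤ t → F t = 1)
    (hG_mono : Monotone G) (hG_range : ∀ t, 0 ≤ G t ∧ G t ≤ 1)
    (hG₀ : ∀ t, t < θl → G t = 0) (hG₁ : ∀ t, θu ≤ t → G t = 1)
    (π π' : ℝ → ℝ)
    -- `π r F = ∫_{θ̲}^{θ̄} 1{θ ≥ r} dF_{(2;M)}(θ)` (Riemann–Stieltjes)
    (hπ : ∀ r ∈ Set.Icc θl θu,
      HasRSIntegral (fun t => if r ≤ t then (1 : ℝ) else 0)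
        (fun t => M * F t ^ (M - 1) * (1 - F t) + F t ^ M) θl θu (π r))
    (hπ' : ∀ r ∈ Set.Icc θl θu,
      HasRSIntegral (fun t => if r ≤ t then (1 : ℝ) else 0)
        (fun t => M * G t ^ (M - 1) * (1 - G t) + G t ^ M) θl θu (π' r)) :
    (∀ r ∈ Set.Icc θl θu,
      |π r - π' r| ≤ 2 * M * (M - 1) * sSup ((fun t => |F t - G t|) '' Set.Icc θl θu)) ∧
    |sSup (π '' Set.Icc θl θu) - sSup (π' '' Set.Icc θl θu)| ≤
      2 * M * (M - 1) * sSup ((fun t => |F t - G t|) '' Set.Icc θl θu) :=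
  auction_profit_lipschitz_general θl θu hθ M hM F G hF_range hF₁ hG_range hG₁ π π' hπ hπ'
end
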